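/- Let u_t = f be an m-component evolution system and A a matrix C-differential operator whose coefficients a^{ij}_k may depend on x, t and the jet variables. Suppose A satisfies the Hamiltonianity condition A_t − [[A,f]] = 0, written out explicitly as the operator identity A_t + E_f(A) − A∘(ℓ_f)* − ℓ_f∘A = 0 on R^m, where A_t is the matrix C-differential operator with coefficients ∂a^{ij}_k/∂t and E_f(A) the one with coefficients Ê_f(a^{ij}_k). Then ℓ_E∘A + A∘ℓ*_E = 0 as ℝ-linear maps R^m → R^m. -/
import Mathlib


/-!
STATEMENT 0: Let `u_t = f` be an `m`-component evolution system and `A` a matrix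
C-differential operator whose coefficients `a^{ij}_k` may depend on `x`, `t` and the jet
variables.  Suppose `A` satisfies the Hamiltonianity condition `A_t − [[A,f]] = 0`,
written out explicitly as the operator identity
`A_t + E_f(A) − A∘(ℓ_f)* − ℓ_f∘A = 0` on `R^m`,
where `A_t` is the matrix C-differential operator with coefficients `∂a^{ij}_k/∂t` and
`E_f(A)` the one with coefficients `Ê_f(a^{ij}_k)` (`Ê_f` being the evolutionary
derivation with `Ê_f(x) = Ê_f(t) = 0`, `Ê_f(u^j_k) = D_x^k(f^j)`).  Then
`ℓ_E∘A + A∘ℓ*_E = 0` as `ℝ`-linear maps `R^m → R^m`, where `ℓ_E := D_t − ℓ_f` and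
`ℓ*_E := −D_t − (ℓ_f)*`.  The bounds `M`, `N` together with the vanishing hypotheses
encode that all the coefficient families have finitely many nonzero members.
-/

open MvPolynomial Finset

noncomputable section

/-- The polynomial algebra `R` over `ℝ` in the variables `x`, `t` and `u^j_k`
(`1 ≤ j ≤ m`, `k ≥ 0`): `X (.inl 0)` is `x`, `X (.inl 1)` is `t`, and
`X (.inr (j,k))` is `u^j_k`. -/
abbrev ERing (m : ℕ) : Type := MvPolynomial (Fin 2 ⊕ (Fin m × ℕ)) ℝ

/-- The total derivative `D_x = ∂/∂x + Σ u^j_{k+1} ∂/∂u^j_k`: the unique derivation with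
`D_x(x) = 1`, `D_x(t) = 0` and `D_x(u^j_k) = u^j_{k+1}`. -/
def Dx (m : ℕ) : Derivation ℝ (ERing m) (ERing m) :=
  mkDerivation ℝ fun i =>
    match i with
    | Sum.inl i => if i = 0 then 1 else 0
    | Sum.inr (j, k) => X (Sum.inr (j, k + 1))

/-- The total derivative `D_t = ∂/∂t + Σ D_x^k(f^j) ∂/∂u^j_k` of the evolution system
`u_t = f`: the unique derivation with `D_t(x) = 0`, `D_t(t) = 1` and
`D_t(u^j_k) = D_x^k(f^j)`. -/
def Dt (m : ℕ) (f : Fin m → ERing m) : Derivation ℝ (ERing m) (ERing m) :=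
  mkDerivation ℝ fun i =>
    match i with
    | Sum.inl i => if i = 0 then 0 else 1
    | Sum.inr (j, k) => (⇑(Dx m))^[k] (f j)

/-- The matrix C-differential operator with coefficients `a^{ij}_k` (vanishing for
`k ≥ N`): `A(φ)^i = Σ_{j,k} a^{ij}_k·D_x^k(φ^j)`. -/
def cdiff (m : ℕ) (a : Fin m → Fin m → ℕ → ERing m) (N : ℕ)
    (φ : Fin m → ERing m) (i : Fin m) : ERing m :=
  ∑ j : Fin m, ∑ k ∈ range N, a i j k * (⇑(Dx m))^[k] (φ j)

/-- The formal adjoint of the matrix C-differential operator with coefficients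
`a^{ij}_k` (vanishing for `k ≥ N`): `A*(φ)^i = Σ_{j,k} (−1)^k·D_x^k(a^{ji}_k·φ^j)`. -/
def cdiffAdj (m : ℕ) (a : Fin m → Fin m → ℕ → ERing m) (N : ℕ)
    (φ : Fin m → ERing m) (i : Fin m) : ERing m :=
  ∑ j : Fin m, ∑ k ∈ range N, (-1 : ERing m) ^ k * (⇑(Dx m))^[k] (a j i k * φ j)

/-- The coefficients `∂f^i/∂u^j_k` of the linearization `ℓ_f` of `f`. -/
def linCoef (m : ℕ) (f : Fin m → ERing m) (i j : Fin m) (k : ℕ) : ERing m :=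
  pderiv (Sum.inr (j, k)) (f i)

/-- The evolutionary derivation `Ê_f`: the unique derivation with `Ê_f(x) = Ê_f(t) = 0`
and `Ê_f(u^j_k) = D_x^k(f^j)`. -/
def Ef (m : ℕ) (f : Fin m → ERing m) : Derivation ℝ (ERing m) (ERing m) :=
  mkDerivation ℝ fun i =>
    match i with
    | Sum.inl _ => 0
    | Sum.inr (j, k) => (⇑(Dx m))^[k] (f j)


lemma Dxk_add (m k : ℕ) (p q : ERing m) :
    (⇑(Dx m))^[k] (p + q) = (⇑(Dx m))^[k] p + (⇑(Dx m))^[k] q := by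
  induction k generalizing p q with
  | zero => rfl
  | succ k ih => simp [Function.iterate_succ_apply, map_add, ih]

lemma Dxk_neg (m k : ℕ) (p : ERing m) :
    (⇑(Dx m))^[k] (-p) = -(⇑(Dx m))^[k] p := by
  induction k generalizing p with
  | zero => rfl
  | succ k ih => simp [Function.iterate_succ_apply, map_neg, ih]

lemma Dt_Dx_comm (m : ℕ) (f : Fin m → ERing m) (p : ERing m) :
    Dt m f (Dx m p) = Dx m (Dt m f p) := by
  have h : (⁅Dt m f, Dx m⁆ : Derivation ℝ (ERing m) (ERing m)) = 0 := by
    apply derivation_ext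
    rintro (i | ⟨j, k⟩)
    · fin_cases i <;>
        simp [Derivation.commutator_apply, Dt, Dx, mkDerivation_X]
    · have hx : Dx m (X (Sum.inr (j, k)) : ERing m) = X (Sum.inr (j, k + 1)) := by
        simp [Dx, mkDerivation_X]
      have ht : ∀ k, Dt m f (X (Sum.inr (j, k)) : ERing m) = (⇑(Dx m))^[k] (f j) := by
        intro k; simp [Dt, mkDerivation_X]
      simp only [Derivation.commutator_apply, Derivation.zero_apply, hx, ht,
        Function.iterate_succ_apply', sub_self]
  have := congrArg (fun D : Derivation ℝ (ERing m) (ERing m) => D p) h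
  simpa [Derivation.commutator_apply, sub_eq_zero] using this

lemma Dt_Dxk_comm (m : ℕ) (f : Fin m → ERing m) (k : ℕ) (p : ERing m) :
    Dt m f ((⇑(Dx m))^[k] p) = (⇑(Dx m))^[k] (Dt m f p) := by
  induction k generalizing p with
  | zero => rfl
  | succ k ih =>
    rw [Function.iterate_succ_apply, Function.iterate_succ_apply, ih, Dt_Dx_comm]

lemma Dt_split (m : ℕ) (f : Fin m → ERing m) (p : ERing m) :
    Dt m f p = pderiv (Sum.inl 1) p + Ef m f p := by
  have h : Dt m f = pderiv (Sum.inl 1) + Ef m f := by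
    apply derivation_ext
    rintro (i | ⟨j, k⟩)
    · fin_cases i <;>
        simp [Dt, Ef, mkDerivation_X, pderiv_X, Pi.single_apply]
    · simp [Dt, Ef, mkDerivation_X, pderiv_X, Pi.single_apply]
  rw [h]; rfl

/-- A Hamiltonian (in the sense `A_t − [[A,f]] = 0`) operator `A` is a variational
bivector on the evolution equation `u_t = f`: `ℓ_E∘A + A∘ℓ*_E = 0`. -/
theorem hamiltonian_operator_is_variational_bivector (m : ℕ) (hm : 1 ≤ m)
    (f : Fin m → ERing m) (M : ℕ)
    (hM : ∀ (i j : Fin m) (k : ℕ), M ≤ k → pderiv (Sum.inr (j, k)) (f i) = 0)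
    (a : Fin m → Fin m → ℕ → ERing m) (N : ℕ)
    (ha : ∀ (i j : Fin m) (k : ℕ), N ≤ k → a i j k = 0)
    (hHam : ∀ (φ : Fin m → ERing m) (i : Fin m),
      cdiff m (fun i j k => pderiv (Sum.inl 1) (a i j k)) N φ i
        + cdiff m (fun i j k => Ef m f (a i j k)) N φ i
        - cdiff m a N (fun j => cdiffAdj m (linCoef m f) M φ j) i
        - cdiff m (linCoef m f) M (cdiff m a N φ) i = 0) :
    ∀ (φ : Fin m → ERing m) (i : Fin m),
      (Dt m f (cdiff m a N φ i) - cdiff m (linCoef m f) M (cdiff m a N φ) i)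
        + cdiff m a N
            (fun j => -Dt m f (φ j) - cdiffAdj m (linCoef m f) M φ j) i = 0 := by
  intro φ i
  have key := hHam φ i
  have hA : cdiff m a N (fun j => -Dt m f (φ j) - cdiffAdj m (linCoef m f) M φ j) i
      = -(cdiff m a N (fun j => Dt m f (φ j)) i)
        - cdiff m a N (fun j => cdiffAdj m (linCoef m f) M φ j) i := by
    simp only [cdiff, sub_eq_add_neg, Dxk_add, Dxk_neg, mul_add, mul_neg,
      Finset.sum_add_distrib, Finset.sum_neg_distrib]
  have hDt : Dt m f (cdiff m a N φ i)
      = cdiff m (fun i j k => pderiv (Sum.inl 1) (a i j k)) N φ i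
        + cdiff m (fun i j k => Ef m f (a i j k)) N φ i
        + cdiff m a N (fun j => Dt m f (φ j)) i := by
    simp only [cdiff, map_sum, Derivation.leibniz, smul_eq_mul, Dt_Dxk_comm,
      Dt_split m f (a i _ _), mul_add, add_mul, Finset.sum_add_distrib]
    have e1 : ∑ j : Fin m, ∑ k ∈ range N, (⇑(Dx m))^[k] (φ j) * pderiv (Sum.inl 1) (a i j k)
        = ∑ j : Fin m, ∑ k ∈ range N, pderiv (Sum.inl 1) (a i j k) * (⇑(Dx m))^[k] (φ j) :=
      Finset.sum_congr rfl fun j _ => Finset.sum_congr rfl fun k _ => mul_comm _ _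
    have e2 : ∑ j : Fin m, ∑ k ∈ range N, (⇑(Dx m))^[k] (φ j) * Ef m f (a i j k)
        = ∑ j : Fin m, ∑ k ∈ range N, Ef m f (a i j k) * (⇑(Dx m))^[k] (φ j) :=
      Finset.sum_congr rfl fun j _ => Finset.sum_congr rfl fun k _ => mul_comm _ _
    rw [e1, e2]; ring
  rw [hA, hDt]
  linear_combination key
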